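/- arXiv:1606.04244 — 3 statements merged into one kernel-verified Lean document; each statement's English description precedes it below -/
import Mathlib

section
/- Let (Ω, F, P) be a probability space, and fix constants p > 1 and κ > 0. Let D_{p,κ} denote the set of probability measures Q on (Ω, F) that admit a density with respect to P, i.e. Q = X·P for some nonnegative F-measurable random variable X, with E_P[X^p] ≤ κ. Then D_{p,κ}, endowed with the total variation distance, is a complete metric space: every sequence (Q_n) in D_{p,κ} that is Cauchy for the total variation distance converges in total variation to some probability measure Q belonging to D_{p,κ}. -/
/-!
For measures with densities `f, g` with respect to `P`, the total variation distance `d` is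
comparable to the `L¹(P)` distance of the densities: splitting `Ω` along `{g ≤ f}` gives
`‖f - g‖₁ ≤ d`, and `|∫_A (f - g)| ≤ ‖f - g‖₁` gives `d ≤ 2 ‖f - g‖₁`. So the densities of a
TV-Cauchy sequence are Cauchy in `L¹` and converge in `L¹` to some `G`, which is again a
probability density and whose measure is the TV limit. Along a subsequence the densities converge
almost everywhere, and Fatou's lemma carries the bound `E[X^p] ≤ κ` over to the limit.
-/

open MeasureTheory Filter Topology
open scoped ENNReal

noncomputable def tvDist {Ω : Type*} [MeasurableSpace Ω] (μ ν : Measure Ω) : ℝ :=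
  2 * ⨆ A : {s : Set Ω // MeasurableSet s}, |(μ A.1).toReal - (ν A.1).toReal|

section TotalVariation

variable {Ω : Type*} [MeasurableSpace Ω]

lemma tvDist_nonneg (μ ν : Measure Ω) : 0 ≤ tvDist μ ν :=
  mul_nonneg zero_le_two (Real.iSup_nonneg fun _ => abs_nonneg _)

lemma tvDist_le (μ ν : Measure Ω) {c : ℝ} (hc : 0 ≤ c)
    (h : ∀ A, MeasurableSet A → |(μ A).toReal - (ν A).toReal| ≤ c) :
    tvDist μ ν ≤ 2 * c :=
  mul_le_mul_of_nonneg_left (Real.iSup_le (fun A => h A.1 A.2) hc) zero_le_two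

lemma abs_toReal_sub_le_half_tvDist (μ ν : Measure Ω) [IsFiniteMeasure μ] [IsFiniteMeasure ν]
    {A : Set Ω} (hA : MeasurableSet A) :
    |(μ A).toReal - (ν A).toReal| ≤ tvDist μ ν / 2 := by
  have hbdd : BddAbove (Set.range fun B : {s : Set Ω // MeasurableSet s} =>
      |(μ B.1).toReal - (ν B.1).toReal|) := by
    refine ⟨μ.real Set.univ + ν.real Set.univ, Set.forall_mem_range.2 fun B => ?_⟩
    have hμ : μ.real B.1 ≤ μ.real Set.univ := measureReal_mono (Set.subset_univ _)
    have hν : ν.real B.1 ≤ ν.real Set.univ := measureReal_mono (Set.subset_univ _)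
    have := measureReal_nonneg (μ := μ) (s := B.1)
    have := measureReal_nonneg (μ := ν) (s := B.1)
    simp only [measureReal_def] at *
    exact abs_sub_le_iff.2 ⟨by linarith, by linarith⟩
  rw [tvDist, mul_div_cancel_left₀ _ two_ne_zero]
  exact le_ciSup hbdd ⟨A, hA⟩

end TotalVariation

section WithDensity

variable {Ω : Type*} [MeasurableSpace Ω] {P : Measure Ω} {f g : Ω → ℝ≥0∞}

lemma toReal_withDensity_apply (hf : AEMeasurable f P) (hf_fin : ∫⁻ ω, f ω ∂P ≠ ∞)
    {A : Set Ω} (hA : MeasurableSet A) :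
    (P.withDensity f A).toReal = ∫ ω in A, (f ω).toReal ∂P := by
  rw [withDensity_apply _ hA, integral_toReal hf.restrict
    (ae_restrict_of_ae (ae_lt_top' hf hf_fin))]

lemma integral_abs_toReal_sub_le_tvDist (hf : Measurable f) (hg : Measurable g)
    (hf_fin : ∫⁻ ω, f ω ∂P ≠ ∞) (hg_fin : ∫⁻ ω, g ω ∂P ≠ ∞) :
    ∫ ω, |(f ω).toReal - (g ω).toReal| ∂P ≤ tvDist (P.withDensity f) (P.withDensity g) := by
  have := isFiniteMeasure_withDensity hf_fin
  have := isFiniteMeasure_withDensity hg_fin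
  have hfi := integrable_toReal_of_lintegral_ne_top hf.aemeasurable hf_fin
  have hgi := integrable_toReal_of_lintegral_ne_top hg.aemeasurable hg_fin
  set A := {ω | (g ω).toReal ≤ (f ω).toReal}
  have hA : MeasurableSet A := measurableSet_le hg.ennreal_toReal hf.ennreal_toReal
  have h_on_A : ∫ ω in A, |(f ω).toReal - (g ω).toReal| ∂P
      = (P.withDensity f A).toReal - (P.withDensity g A).toReal := by
    rw [toReal_withDensity_apply hf.aemeasurable hf_fin hA,
      toReal_withDensity_apply hg.aemeasurable hg_fin hA, ← integral_sub hfi.restrict hgi.restrict]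
    exact setIntegral_congr_fun hA fun ω hω => abs_of_nonneg (sub_nonneg.2 hω)
  have h_off_A : ∫ ω in Aᶜ, |(f ω).toReal - (g ω).toReal| ∂P
      = (P.withDensity g Aᶜ).toReal - (P.withDensity f Aᶜ).toReal := by
    rw [toReal_withDensity_apply hf.aemeasurable hf_fin hA.compl,
      toReal_withDensity_apply hg.aemeasurable hg_fin hA.compl,
      ← integral_sub hgi.restrict hfi.restrict]
    refine setIntegral_congr_fun hA.compl fun ω hω => ?_
    rw [abs_sub_comm, abs_of_pos (sub_pos.2 (lt_of_not_ge hω : (f ω).toReal < (g ω).toReal))]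
  have hdiff : Integrable (fun ω => |(f ω).toReal - (g ω).toReal|) P := (hfi.sub hgi).abs
  rw [← integral_add_compl hA hdiff, h_on_A, h_off_A]
  linarith [le_abs_self ((P.withDensity f A).toReal - (P.withDensity g A).toReal),
    neg_abs_le ((P.withDensity f Aᶜ).toReal - (P.withDensity g Aᶜ).toReal),
    abs_toReal_sub_le_half_tvDist (P.withDensity f) (P.withDensity g) hA,
    abs_toReal_sub_le_half_tvDist (P.withDensity f) (P.withDensity g) hA.compl]

lemma tvDist_withDensity_le (hf : AEMeasurable f P) (hg : AEMeasurable g P)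
    (hf_fin : ∫⁻ ω, f ω ∂P ≠ ∞) (hg_fin : ∫⁻ ω, g ω ∂P ≠ ∞) :
    tvDist (P.withDensity f) (P.withDensity g) ≤ 2 * ∫ ω, |(f ω).toReal - (g ω).toReal| ∂P := by
  have hfi := integrable_toReal_of_lintegral_ne_top hf hf_fin
  have hgi := integrable_toReal_of_lintegral_ne_top hg hg_fin
  refine tvDist_le _ _ (integral_nonneg fun _ => abs_nonneg _) fun A hA => ?_
  rw [toReal_withDensity_apply hf hf_fin hA, toReal_withDensity_apply hg hg_fin hA,
    ← integral_sub hfi.restrict hgi.restrict]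
  exact abs_integral_le_integral_abs.trans
    (setIntegral_le_integral (hfi.sub hgi).abs (Eventually.of_forall fun _ => abs_nonneg _))

end WithDensity

section L1

variable {Ω : Type*} [MeasurableSpace Ω] {μ : Measure Ω}

lemma dist_toL1_toL1 {f g : Ω → ℝ} (hf : Integrable f μ) (hg : Integrable g μ) :
    dist (hf.toL1 f) (hg.toL1 g) = ∫ ω, |f ω - g ω| ∂μ := by
  rw [dist_eq_norm, ← Integrable.toL1_sub, L1.norm_eq_integral_norm]
  exact integral_congr_ae ((hf.sub hg).coeFn_toL1.mono fun ω h => by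
    simp only [h, Real.norm_eq_abs, Pi.sub_apply])

lemma exists_tendsto_integral_abs_sub_of_cauchy {f : ℕ → Ω → ℝ} (hf : ∀ n, Integrable (f n) μ)
    (hcauchy : ∀ ε > 0, ∃ N, ∀ m ≥ N, ∀ n ≥ N, ∫ ω, |f m ω - f n ω| ∂μ ≤ ε) :
    ∃ G : Ω → ℝ, Measurable G ∧ Integrable G μ ∧
      Tendsto (fun n => ∫ ω, |f n ω - G ω| ∂μ) atTop (𝓝 0) := by
  have hF : CauchySeq fun n => (hf n).toL1 (f n) := by
    refine Metric.cauchySeq_iff.2 fun ε hε => ?_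
    obtain ⟨N, hN⟩ := hcauchy (ε / 2) (half_pos hε)
    exact ⟨N, fun m hm n hn => by
      rw [dist_toL1_toL1]
      exact (hN m hm n hn).trans_lt (half_lt_self hε)⟩
  obtain ⟨G, hG⟩ := cauchySeq_tendsto_of_complete hF
  refine ⟨G, (Lp.stronglyMeasurable G).measurable, L1.integrable_coeFn G, ?_⟩
  have hdist n : dist ((hf n).toL1 (f n)) G = ∫ ω, |f n ω - G ω| ∂μ := by
    conv_lhs => rw [← Integrable.toL1_coeFn G (L1.integrable_coeFn G)]
    exact dist_toL1_toL1 _ _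
  simpa only [hdist] using tendsto_iff_dist_tendsto_zero.1 hG

variable {f : ℕ → Ω → ℝ} {G : Ω → ℝ}

lemma tendsto_eLpNorm_one_of_tendsto_integral_abs_sub (hf : ∀ n, Integrable (f n) μ)
    (hG : Integrable G μ) (hlim : Tendsto (fun n => ∫ ω, |f n ω - G ω| ∂μ) atTop (𝓝 0)) :
    Tendsto (fun n => eLpNorm (f n - G) 1 μ) atTop (𝓝 0) := by
  have h n : eLpNorm (f n - G) 1 μ = ENNReal.ofReal (∫ ω, |f n ω - G ω| ∂μ) := by
    rw [eLpNorm_one_eq_lintegral_enorm, ← ofReal_integral_norm_eq_lintegral_enorm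
      ((hf n).sub hG)]
    rfl
  simpa only [h, ENNReal.ofReal_zero] using ENNReal.tendsto_ofReal hlim

lemma tendsto_integral_of_tendsto_integral_abs_sub (hf : ∀ n, Integrable (f n) μ)
    (hG : Integrable G μ) (hlim : Tendsto (fun n => ∫ ω, |f n ω - G ω| ∂μ) atTop (𝓝 0)) :
    Tendsto (fun n => ∫ ω, f n ω ∂μ) atTop (𝓝 (∫ ω, G ω ∂μ)) :=
  tendsto_integral_of_L1' G hG.aestronglyMeasurable (Eventually.of_forall hf)
    (tendsto_eLpNorm_one_of_tendsto_integral_abs_sub hf hG hlim)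

lemma exists_seq_tendsto_ae_of_tendsto_integral_abs_sub (hf : ∀ n, Integrable (f n) μ)
    (hG : Integrable G μ) (hlim : Tendsto (fun n => ∫ ω, |f n ω - G ω| ∂μ) atTop (𝓝 0)) :
    ∃ ns : ℕ → ℕ, StrictMono ns ∧ ∀ᵐ ω ∂μ, Tendsto (fun k => f (ns k) ω) atTop (𝓝 (G ω)) :=
  (tendstoInMeasure_of_tendsto_eLpNorm one_ne_zero (fun n => (hf n).aestronglyMeasurable)
    hG.aestronglyMeasurable
    (tendsto_eLpNorm_one_of_tendsto_integral_abs_sub hf hG hlim)).exists_seq_tendsto_ae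

end L1

lemma lintegral_le_of_tendsto_ae {Ω : Type*} [MeasurableSpace Ω] {μ : Measure Ω}
    {F : ℕ → Ω → ℝ≥0∞} {f : Ω → ℝ≥0∞} {c : ℝ≥0∞} (hF : ∀ k, AEMeasurable (F k) μ)
    (hlim : ∀ᵐ ω ∂μ, Tendsto (fun k => F k ω) atTop (𝓝 (f ω)))
    (hbound : ∀ k, ∫⁻ ω, F k ω ∂μ ≤ c) :
    ∫⁻ ω, f ω ∂μ ≤ c :=
  calc ∫⁻ ω, f ω ∂μ = ∫⁻ ω, liminf (fun k => F k ω) atTop ∂μ :=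
        lintegral_congr_ae (hlim.mono fun _ h => h.liminf_eq.symm)
    _ ≤ liminf (fun k => ∫⁻ ω, F k ω ∂μ) atTop := lintegral_liminf_le' hF
    _ ≤ c := liminf_le_of_frequently_le' (Frequently.of_forall hbound)

lemma exists_tendsto_tvDist_withDensity_of_cauchy {Ω : Type*} [MeasurableSpace Ω]
    {P : Measure Ω} {X : ℕ → Ω → ℝ≥0∞} (hX : ∀ n, Measurable (X n))
    (hX_one : ∀ n, ∫⁻ ω, X n ω ∂P = 1)
    (hcauchy : ∀ ε > 0, ∃ N, ∀ m ≥ N, ∀ n ≥ N,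
      tvDist (P.withDensity (X m)) (P.withDensity (X n)) ≤ ε) :
    ∃ Y : Ω → ℝ≥0∞, Measurable Y ∧ ∫⁻ ω, Y ω ∂P = 1 ∧
      (∃ ns : ℕ → ℕ, StrictMono ns ∧ ∀ᵐ ω ∂P, Tendsto (fun k => X (ns k) ω) atTop (𝓝 (Y ω))) ∧
      Tendsto (fun n => tvDist (P.withDensity (X n)) (P.withDensity Y)) atTop (𝓝 0) := by
  have hX_fin n : ∫⁻ ω, X n ω ∂P ≠ ∞ := (hX_one n).trans_ne ENNReal.one_ne_top
  set g : ℕ → Ω → ℝ := fun n ω => (X n ω).toReal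
  have hg_int n : Integrable (g n) P :=
    integrable_toReal_of_lintegral_ne_top (hX n).aemeasurable (hX_fin n)
  have hg_one n : ∫ ω, g n ω ∂P = 1 := by
    rw [integral_toReal (hX n).aemeasurable (ae_lt_top (hX n) (hX_fin n)), hX_one n,
      ENNReal.toReal_one]
  obtain ⟨G, hG_meas, hG_int, hG_lim⟩ := exists_tendsto_integral_abs_sub_of_cauchy hg_int
    fun ε hε => (hcauchy ε hε).imp fun N hN m hm n hn =>
      (integral_abs_toReal_sub_le_tvDist (hX m) (hX n) (hX_fin m) (hX_fin n)).trans (hN m hm n hn)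
  obtain ⟨ns, hns_mono, hns⟩ :=
    exists_seq_tendsto_ae_of_tendsto_integral_abs_sub hg_int hG_int hG_lim
  have hG_nonneg : 0 ≤ᵐ[P] G :=
    hns.mono fun ω h => ge_of_tendsto' h fun _ => ENNReal.toReal_nonneg
  have hG_one : ∫ ω, G ω ∂P = 1 :=
    tendsto_nhds_unique (tendsto_integral_of_tendsto_integral_abs_sub hg_int hG_int hG_lim)
      (by simp only [hg_one, tendsto_const_nhds])
  have hY_one : ∫⁻ ω, ENNReal.ofReal (G ω) ∂P = 1 := by
    rw [← ofReal_integral_eq_lintegral_ofReal hG_int hG_nonneg, hG_one, ENNReal.ofReal_one]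
  have hY_meas : Measurable fun ω => ENNReal.ofReal (G ω) := ENNReal.measurable_ofReal.comp hG_meas
  refine ⟨fun ω => ENNReal.ofReal (G ω), hY_meas, hY_one, ⟨ns, hns_mono, ?_⟩, ?_⟩
  · filter_upwards [hns, ae_all_iff.2 fun n => ae_lt_top (hX n) (hX_fin n)] with ω hω hX_lt
    exact ((ENNReal.continuous_ofReal.tendsto _).comp hω).congr fun k =>
      ENNReal.ofReal_toReal (hX_lt _).ne
  · have hY_toReal n : ∫ ω, |g n ω - (ENNReal.ofReal (G ω)).toReal| ∂P = ∫ ω, |g n ω - G ω| ∂P :=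
      integral_congr_ae (hG_nonneg.mono fun ω h => by simp only [ENNReal.toReal_ofReal h])
    refine squeeze_zero (fun n => tvDist_nonneg _ _) (fun n => ?_)
      (by simpa using hG_lim.const_mul 2)
    rw [← hY_toReal]
    exact tvDist_withDensity_le (hX n).aemeasurable hY_meas.aemeasurable (hX_fin n)
      (hY_one.trans_ne ENNReal.one_ne_top)

theorem complete_D_p_kappa_general {Ω : Type*} [MeasurableSpace Ω]
    (P : Measure Ω)
    (p κ : ℝ)
    (Q : ℕ → Measure Ω) (X : ℕ → Ω → ℝ≥0∞)
    (hQprob : ∀ n, IsProbabilityMeasure (Q n))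
    (hXmeas : ∀ n, Measurable (X n))
    (hdens : ∀ n, Q n = P.withDensity (X n))
    (hXp : ∀ n, ∫⁻ ω, (X n ω) ^ p ∂P ≤ ENNReal.ofReal κ)
    (hCauchy : ∀ ε : ℝ, 0 < ε → ∃ N : ℕ, ∀ m ≥ N, ∀ n ≥ N, tvDist (Q m) (Q n) ≤ ε) :
    ∃ (Qlim : Measure Ω) (Xlim : Ω → ℝ≥0∞),
      IsProbabilityMeasure Qlim ∧
      Measurable Xlim ∧
      Qlim = P.withDensity Xlim ∧
      (∫⁻ ω, (Xlim ω) ^ p ∂P ≤ ENNReal.ofReal κ) ∧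
      Tendsto (fun n => tvDist (Q n) Qlim) atTop (nhds 0) := by
  have hX_one n : ∫⁻ ω, X n ω ∂P = 1 := by
    simpa [hdens n] using (hQprob n).measure_univ
  obtain ⟨Y, hY_meas, hY_one, ⟨ns, -, hns⟩, hY_tv⟩ :=
    exists_tendsto_tvDist_withDensity_of_cauchy hXmeas hX_one (by simpa only [hdens] using hCauchy)
  refine ⟨P.withDensity Y, Y, ⟨by simpa using hY_one⟩, hY_meas, rfl, ?_, by simpa only [hdens]⟩
  exact lintegral_le_of_tendsto_ae (fun k => ((hXmeas (ns k)).pow_const p).aemeasurable)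
    (hns.mono fun ω h => (ENNReal.continuous_rpow_const.tendsto _).comp h) fun k => hXp (ns k)

/-- The set `D_{p,κ}` of probability measures with a density `X` w.r.t. `P`
satisfying `E_P[X^p] ≤ κ` is complete for the total variation distance. -/
theorem complete_D_p_kappa {Ω : Type*} [MeasurableSpace Ω]
    (P : Measure Ω) [IsProbabilityMeasure P]
    (p κ : ℝ) (hp : 1 < p) (hκ : 0 < κ)
    (Q : ℕ → Measure Ω) (X : ℕ → Ω → ℝ≥0∞)
    (hQprob : ∀ n, IsProbabilityMeasure (Q n))
    (hXmeas : ∀ n, Measurable (X n))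
    (hdens : ∀ n, Q n = P.withDensity (X n))
    (hXp : ∀ n, ∫⁻ ω, (X n ω) ^ p ∂P ≤ ENNReal.ofReal κ)
    (hCauchy : ∀ ε : ℝ, 0 < ε → ∃ N : ℕ, ∀ m ≥ N, ∀ n ≥ N, tvDist (Q m) (Q n) ≤ ε) :
    ∃ (Qlim : Measure Ω) (Xlim : Ω → ℝ≥0∞),
      IsProbabilityMeasure Qlim ∧
      Measurable Xlim ∧
      Qlim = P.withDensity Xlim ∧
      (∫⁻ ω, (Xlim ω) ^ p ∂P ≤ ENNReal.ofReal κ) ∧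
      Tendsto (fun n => tvDist (Q n) Qlim) atTop (nhds 0) :=
  complete_D_p_kappa_general P p κ Q X hQprob hXmeas hdens hXp hCauchy
end

section
/- Let (Ω, F, P) be a probability space and fix constants p > 1 and κ > 0. For each n, let Q_n = X_n·P be a probability measure on (Ω, F) with nonnegative F-measurable density X_n satisfying E_P[X_n^p] ≤ κ. Suppose Q is a probability measure on (Ω, F) such that the total variation distance d(Q_n, Q) tends to 0 as n → ∞. Then Q is absolutely continuous with respect to P, and its density X satisfies E_P[X^p] ≤ κ. -/
/-!
A `P`-null set is `Q n`-null for every `n`, hence `Qlim`-null in the limit. Once both measures are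
given by densities, the total variation distance dominates the `L¹(P)` distance of the densities,
so `X n` converges in `L¹(P)` to the density of `Qlim`; a subsequence converges `P`-a.e., and
Fatou's lemma passes the bound on `∫ (X n)^p` to the limit.
-/

open MeasureTheory Filter Topology
open scoped ENNReal

section TotalVariation

variable {Ω : Type*} [MeasurableSpace Ω]

lemma tvDist_comm (μ ν : Measure Ω) : tvDist μ ν = tvDist ν μ := by
  simp only [tvDist, abs_sub_comm]

lemma two_mul_abs_sub_le_tvDist (μ ν : Measure Ω) [IsFiniteMeasure μ] [IsFiniteMeasure ν]
    {A : Set Ω} (hA : MeasurableSet A) : 2 * |μ.real A - ν.real A| ≤ tvDist μ ν := by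
  have hbdd : BddAbove (Set.range fun B : {s : Set Ω // MeasurableSet s} =>
      |μ.real B.1 - ν.real B.1|) := by
    refine ⟨μ.real Set.univ + ν.real Set.univ, ?_⟩
    rintro _ ⟨B, rfl⟩
    have hμ : μ.real B.1 ≤ μ.real Set.univ := measureReal_mono (Set.subset_univ _)
    have hν : ν.real B.1 ≤ ν.real Set.univ := measureReal_mono (Set.subset_univ _)
    exact abs_sub_le_iff.2 ⟨by linarith [measureReal_nonneg (μ := ν) (s := B.1)],
      by linarith [measureReal_nonneg (μ := μ) (s := B.1)]⟩
  unfold tvDist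
  gcongr
  exact le_ciSup hbdd ⟨A, hA⟩

lemma measure_tsub_le_tvDist (μ ν : Measure Ω) [IsFiniteMeasure μ] [IsFiniteMeasure ν]
    {A : Set Ω} (hA : MeasurableSet A) : μ A - ν A ≤ ENNReal.ofReal (tvDist μ ν / 2) := by
  have h := two_mul_abs_sub_le_tvDist μ ν hA
  calc μ A - ν A = ENNReal.ofReal (μ.real A - ν.real A) := by
        rw [ENNReal.ofReal_sub _ measureReal_nonneg, ofReal_measureReal, ofReal_measureReal]
    _ ≤ ENNReal.ofReal (tvDist μ ν / 2) :=
        ENNReal.ofReal_le_ofReal (by linarith [le_abs_self (μ.real A - ν.real A)])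

lemma absolutelyContinuous_of_tendsto_tvDist {ι : Type*} {l : Filter ι} [l.NeBot]
    {μ : ι → Measure Ω} {ν P : Measure Ω} [∀ i, IsFiniteMeasure (μ i)] [IsFiniteMeasure ν]
    (hμ : ∀ i, μ i ≪ P) (h : Tendsto (fun i => tvDist (μ i) ν) l (𝓝 0)) : ν ≪ P := by
  refine Measure.AbsolutelyContinuous.mk fun A hA hPA => ?_
  have hle : ∀ i, 2 * ν.real A ≤ tvDist (μ i) ν := fun i => by
    have hμA : (μ i).real A = 0 := by simp [Measure.real, hμ i hPA]
    simpa [hμA, abs_of_nonneg (measureReal_nonneg : 0 ≤ ν.real A)] using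
      two_mul_abs_sub_le_tvDist (μ i) ν hA
  have hνA : ν.real A ≤ 0 := by linarith [ge_of_tendsto' h hle]
  exact (measureReal_eq_zero_iff (measure_ne_top ν A)).1 (le_antisymm hνA measureReal_nonneg)

end TotalVariation

section Densities

variable {Ω : Type*} [MeasurableSpace Ω] {P : Measure Ω} {f g : Ω → ℝ≥0∞}

lemma lintegral_tsub_eq_withDensity_sub (hf : Measurable f) (hg : Measurable g)
    [IsFiniteMeasure (P.withDensity g)] :
    ∫⁻ x, f x - g x ∂P =
      P.withDensity f {x | g x ≤ f x} - P.withDensity g {x | g x ≤ f x} := by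
  set A := {x | g x ≤ f x}
  have hfg : MeasurableSet A := measurableSet_le hg hf
  have hg_fin : ∫⁻ x, g x ∂P ≠ ∞ := by simpa using measure_ne_top (P.withDensity g) Set.univ
  have hind : (fun x => f x - g x) = A.indicator fun x => f x - g x := by
    ext x
    by_cases hx : x ∈ A
    · rw [Set.indicator_of_mem hx]
    · rw [Set.indicator_of_notMem hx, tsub_eq_zero_of_le (not_le.1 hx).le]
  rw [hind, lintegral_indicator hfg, withDensity_apply _ hfg, withDensity_apply _ hfg]
  exact lintegral_sub hg (ne_top_of_le_ne_top hg_fin (setLIntegral_le_lintegral _ _))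
    ((ae_restrict_iff' hfg).2 (ae_of_all _ fun _ hx => hx))

lemma lintegral_tsub_add_tsub_le_tvDist (hf : Measurable f) (hg : Measurable g)
    [IsFiniteMeasure (P.withDensity f)] [IsFiniteMeasure (P.withDensity g)] :
    ∫⁻ x, (f x - g x) + (g x - f x) ∂P ≤
      ENNReal.ofReal (tvDist (P.withDensity f) (P.withDensity g)) := by
  rw [lintegral_add_left (f := fun x => f x - g x) (hf.sub hg),
    lintegral_tsub_eq_withDensity_sub hf hg, lintegral_tsub_eq_withDensity_sub hg hf]
  calc _ ≤ ENNReal.ofReal (tvDist (P.withDensity f) (P.withDensity g) / 2) +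
        ENNReal.ofReal (tvDist (P.withDensity f) (P.withDensity g) / 2) := by
        gcongr
        · exact measure_tsub_le_tvDist _ _ (measurableSet_le hg hf)
        · rw [tvDist_comm]
          exact measure_tsub_le_tvDist _ _ (measurableSet_le hf hg)
    _ = _ := by
        have := div_nonneg (tvDist_nonneg (P.withDensity f) (P.withDensity g)) zero_le_two
        rw [← ENNReal.ofReal_add this this, add_halves]

end Densities

section AeConvergence

lemma ENNReal.tendsto_of_tsub_add_tsub_tendsto_zero {ι : Type*} {l : Filter ι}
    {a : ℝ≥0∞} {b : ι → ℝ≥0∞} (ha : a ≠ ∞)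
    (h : Tendsto (fun i => (b i - a) + (a - b i)) l (𝓝 0)) : Tendsto b l (𝓝 a) := by
  refine (ENNReal.tendsto_nhds ha).2 fun ε hε => ?_
  filter_upwards [h.eventually (eventually_le_nhds hε)] with i hi
  exact ⟨tsub_le_iff_tsub_le.1 (le_add_self.trans hi),
    tsub_le_iff_left.1 (le_self_add.trans hi)⟩

variable {α : Type*} [MeasurableSpace α] {μ : Measure α}

lemma exists_seq_tendsto_ae_of_tendsto_lintegral {f : ℕ → α → ℝ≥0∞} {g : α → ℝ≥0∞}
    (hf : ∀ n, Measurable (f n)) (hg : Measurable g) (hg_fin : ∀ᵐ x ∂μ, g x ≠ ∞)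
    (h : Tendsto (fun n => ∫⁻ x, (f n x - g x) + (g x - f n x) ∂μ) atTop (𝓝 0)) :
    ∃ φ : ℕ → ℕ, StrictMono φ ∧ ∀ᵐ x ∂μ, Tendsto (fun k => f (φ k) x) atTop (𝓝 (g x)) := by
  obtain ⟨φ, hφ, hsmall⟩ := extraction_forall_of_eventually' fun k =>
    ENNReal.tendsto_atTop_zero.1 h ((2 : ℝ≥0∞)⁻¹ ^ k) (ENNReal.pow_pos (by simp) k)
  have hd : ∀ k, Measurable fun x => (f (φ k) x - g x) + (g x - f (φ k) x) :=
    fun k => ((hf _).sub hg).add (hg.sub (hf _))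
  -- the integrals along `φ` are dominated by a geometric series
  have hsum : ∫⁻ x, ∑' k, ((f (φ k) x - g x) + (g x - f (φ k) x)) ∂μ ≠ ∞ := by
    rw [lintegral_tsum fun k => (hd k).aemeasurable]
    refine ne_top_of_le_ne_top ?_ (ENNReal.tsum_le_tsum hsmall)
    simp [ENNReal.tsum_geometric, ENNReal.one_sub_inv_two]
  refine ⟨φ, hφ, ?_⟩
  filter_upwards [ae_lt_top (Measurable.tsum hd) hsum, hg_fin] with x hx hgx
  exact ENNReal.tendsto_of_tsub_add_tsub_tendsto_zero hgx
    (ENNReal.tendsto_atTop_zero_of_tsum_ne_top hx.ne)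

lemma lintegral_le_of_tendsto_ae_s1 {ι : Type*} {l : Filter ι} [l.IsCountablyGenerated] [l.NeBot]
    {f : ι → α → ℝ≥0∞} {g : α → ℝ≥0∞} {C : ℝ≥0∞} (hf : ∀ i, AEMeasurable (f i) μ)
    (hlim : ∀ᵐ x ∂μ, Tendsto (fun i => f i x) l (𝓝 (g x)))
    (hC : ∀ᶠ i in l, ∫⁻ x, f i x ∂μ ≤ C) : ∫⁻ x, g x ∂μ ≤ C :=
  calc ∫⁻ x, g x ∂μ = ∫⁻ x, liminf (fun i => f i x) l ∂μ :=
        lintegral_congr_ae (hlim.mono fun _ hx => hx.liminf_eq.symm)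
    _ ≤ liminf (fun i => ∫⁻ x, f i x ∂μ) l := lintegral_liminf_le' hf
    _ ≤ C := liminf_le_of_frequently_le' hC.frequently

end AeConvergence

theorem limit_density_bound_general {Ω : Type*} [MeasurableSpace Ω]
    (P : Measure Ω) [IsProbabilityMeasure P]
    (p κ : ℝ)
    (Q : ℕ → Measure Ω) (X : ℕ → Ω → ℝ≥0∞)
    (hQprob : ∀ n, IsProbabilityMeasure (Q n))
    (hXmeas : ∀ n, Measurable (X n))
    (hdens : ∀ n, Q n = P.withDensity (X n))
    (hXp : ∀ n, ∫⁻ ω, (X n ω) ^ p ∂P ≤ ENNReal.ofReal κ)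
    (Qlim : Measure Ω) [IsProbabilityMeasure Qlim]
    (hconv : Tendsto (fun n => tvDist (Q n) Qlim) atTop (nhds 0)) :
    Qlim ≪ P ∧ ∫⁻ ω, (Qlim.rnDeriv P ω) ^ p ∂P ≤ ENNReal.ofReal κ := by
  have hac : Qlim ≪ P := absolutelyContinuous_of_tendsto_tvDist
    (fun n => hdens n ▸ withDensity_absolutelyContinuous P (X n)) hconv
  refine ⟨hac, ?_⟩
  set g := Qlim.rnDeriv P
  have hg : Measurable g := Measure.measurable_rnDeriv Qlim P
  have hQlim : P.withDensity g = Qlim := Measure.withDensity_rnDeriv_eq Qlim P hac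
  have : ∀ n, IsFiniteMeasure (P.withDensity (X n)) := fun n => hdens n ▸ inferInstance
  have : IsFiniteMeasure (P.withDensity g) := hQlim ▸ inferInstance
  have hL1 : Tendsto (fun n => ∫⁻ ω, (X n ω - g ω) + (g ω - X n ω) ∂P) atTop (𝓝 0) := by
    refine tendsto_of_tendsto_of_tendsto_of_le_of_le tendsto_const_nhds
      (by simpa using ENNReal.tendsto_ofReal hconv) (fun _ => zero_le) fun n => ?_
    have := lintegral_tsub_add_tsub_le_tvDist (P := P) (hXmeas n) hg
    rwa [← hdens n, hQlim] at this
  obtain ⟨φ, -, hφ⟩ := exists_seq_tendsto_ae_of_tendsto_lintegral hXmeas hg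
    ((Measure.rnDeriv_lt_top Qlim P).mono fun _ h => h.ne) hL1
  exact lintegral_le_of_tendsto_ae_s1
    (fun k => (ENNReal.continuous_rpow_const.measurable.comp (hXmeas (φ k))).aemeasurable)
    (hφ.mono fun _ h => (ENNReal.continuous_rpow_const.tendsto _).comp h)
    (Eventually.of_forall fun k => hXp (φ k))

/-- If each `Q n` has a density `X n` w.r.t. `P` with `E_P[(X n)^p] ≤ κ` and
`Q n → Q` in total variation, then `Q ≪ P` and its density satisfies the same bound. -/
theorem limit_density_bound {Ω : Type*} [MeasurableSpace Ω]
    (P : Measure Ω) [IsProbabilityMeasure P]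
    (p κ : ℝ) (hp : 1 < p) (hκ : 0 < κ)
    (Q : ℕ → Measure Ω) (X : ℕ → Ω → ℝ≥0∞)
    (hQprob : ∀ n, IsProbabilityMeasure (Q n))
    (hXmeas : ∀ n, Measurable (X n))
    (hdens : ∀ n, Q n = P.withDensity (X n))
    (hXp : ∀ n, ∫⁻ ω, (X n ω) ^ p ∂P ≤ ENNReal.ofReal κ)
    (Qlim : Measure Ω) [IsProbabilityMeasure Qlim]
    (hconv : Tendsto (fun n => tvDist (Q n) Qlim) atTop (nhds 0)) :
    Qlim ≪ P ∧ ∫⁻ ω, (Qlim.rnDeriv P ω) ^ p ∂P ≤ ENNReal.ofReal κ :=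
  limit_density_bound_general P p κ Q X hQprob hXmeas hdens hXp Qlim hconv
end

section
/- Let μ be a finite measure on a measurable space (Ω, A) and let (U, δ) be a complete separable metric space. Let (u_n) be a sequence of Borel measurable functions Ω → U that is Cauchy for the Ekeland distance, i.e. for every ε > 0 there exists N such that for all m, n ≥ N, μ({ω : u_n(ω) ≠ u_m(ω)}) ≤ ε. Then there exists a Borel measurable function u : Ω → U such that μ({ω : u_n(ω) ≠ u(ω)}) → 0 as n → ∞; that is, the space of measurable U-valued functions (identified up to μ-a.e. equality) is complete for the Ekeland distance. -/
open MeasureTheory Filter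
open scoped ENNReal

/-- Completeness for the Ekeland distance: a sequence of measurable functions into a
complete separable metric space that is Cauchy for `d_E(u,v) = μ {u ≠ v}` converges
in that distance to some measurable function. -/
theorem ekeland_complete {Ω U : Type*} [MeasurableSpace Ω]
    [MetricSpace U] [CompleteSpace U] [TopologicalSpace.SeparableSpace U]
    [MeasurableSpace U] [BorelSpace U]
    (μ : Measure Ω) [IsFiniteMeasure μ]
    (u : ℕ → Ω → U) (humeas : ∀ n, Measurable (u n))
    (hCauchy : ∀ ε : ℝ≥0∞, 0 < ε → ∃ N : ℕ, ∀ m ≥ N, ∀ n ≥ N,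
      μ {ω | u n ω ≠ u m ω} ≤ ε) :
    ∃ v : Ω → U, Measurable v ∧
      Tendsto (fun n => μ {ω | u n ω ≠ v ω}) atTop (nhds 0) := by
  have hpos : ∀ k : ℕ, (0 : ℝ≥0∞) < 2⁻¹ ^ k := fun k => ENNReal.pow_pos (by norm_num) k
  choose N hN using fun k => hCauchy (2⁻¹ ^ k) (hpos k)
  set φ : ℕ → ℕ := fun k => k + (Finset.range (k + 1)).sum N with hφdef
  have hφmono : Monotone φ := by
    apply monotone_nat_of_le_succ
    intro k
    simp only [hφdef]
    exact Nat.add_le_add (Nat.le_succ k)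
      (Finset.sum_le_sum_of_subset (Finset.range_subset_range.2 (by omega)))
  have hφge : ∀ k, N k ≤ φ k := by
    intro k
    have : N k ≤ (Finset.range (k + 1)).sum N :=
      Finset.single_le_sum (f := N) (fun _ _ => Nat.zero_le _)
        (Finset.self_mem_range_succ k)
    simp only [hφdef]; omega
  have hφself : ∀ k, k ≤ φ k := fun k => Nat.le_add_right _ _
  set E : ℕ → Set Ω := fun k => {ω | u (φ (k + 1)) ω ≠ u (φ k) ω} with hEdef
  have hEbound : ∀ k, μ (E k) ≤ 2⁻¹ ^ k := fun k =>
    hN k (φ k) (hφge k) (φ (k + 1)) (le_trans (hφge k) (hφmono (Nat.le_succ k)))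
  have hgeo : (∑' k : ℕ, (2⁻¹ : ℝ≥0∞) ^ k) = 2 := by
    rw [ENNReal.tsum_geometric, ENNReal.one_sub_inv_two, inv_inv]
  have hsum : (∑' k, μ (E k)) ≠ ∞ := by
    refine ne_top_of_le_ne_top ?_ (ENNReal.tsum_le_tsum hEbound)
    rw [hgeo]; exact ENNReal.ofNat_ne_top
  have hBC : μ (limsup E atTop) = 0 := measure_limsup_atTop_eq_zero hsum
  have haelimsup : ∀ᵐ ω ∂μ, ω ∉ limsup E atTop :=
    measure_eq_zero_iff_ae_notMem.mp hBC
  -- off the limsup, the subsequence is eventually constant, hence converges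
  have hconst : ∀ ω K, (∀ j ≥ K, ω ∉ E j) → ∀ k ≥ K, u (φ k) ω = u (φ K) ω := by
    intro ω K hω k hk
    induction k with
    | zero =>
      have hK0 : K = 0 := by omega
      rw [hK0]
    | succ k ih =>
      rcases Nat.lt_or_ge K (k + 1) with h | h
      · have hk' : K ≤ k := by omega
        have h1 : u (φ (k + 1)) ω = u (φ k) ω := by
          have := hω k hk'
          simpa [hEdef, not_not] using this
        rw [h1, ih hk']
      · have : K = k + 1 := by omega
        rw [this]
  have haeconv : ∀ᵐ ω ∂μ, ∃ l, Tendsto (fun k => u (φ k) ω) atTop (nhds l) := by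
    filter_upwards [haelimsup] with ω hω
    rw [mem_limsup_iff_frequently_mem, not_frequently] at hω
    rw [eventually_atTop] at hω
    obtain ⟨K, hK⟩ := hω
    refine ⟨u (φ K) ω, ?_⟩
    apply tendsto_const_nhds.congr'
    filter_upwards [eventually_ge_atTop K] with k hk
    exact (hconst ω K hK k hk).symm
  obtain ⟨v, hvmeas, hvlim⟩ :=
    measurable_limit_of_tendsto_metrizable_ae (μ := μ) (f := fun k => u (φ k))
      (fun k => (humeas (φ k)).aemeasurable) haeconv
  refine ⟨v, hvmeas, ?_⟩
  -- key estimate: μ {u (φ K) ≠ v} ≤ 2⁻¹ ^ K * 2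
  have hkey : ∀ K, μ {ω | u (φ K) ω ≠ v ω} ≤ 2⁻¹ ^ K * 2 := by
    intro K
    have hsub : μ {ω | u (φ K) ω ≠ v ω} ≤ μ (⋃ j, E (K + j)) := by
      apply measure_mono_ae
      filter_upwards [hvlim, haelimsup] with ω hω hω' hne
      by_contra hmem
      have hωK : ∀ j ≥ K, ω ∉ E j := by
        intro j hj hjE
        exact hmem (Set.mem_iUnion.2 ⟨j - K, by rwa [show K + (j - K) = j by omega]⟩)
      have : Tendsto (fun k => u (φ k) ω) atTop (nhds (u (φ K) ω)) := by
        apply tendsto_const_nhds.congr'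
        filter_upwards [eventually_ge_atTop K] with k hk
        exact (hconst ω K hωK k hk).symm
      exact hne (tendsto_nhds_unique this hω)
    refine hsub.trans ((measure_iUnion_le _).trans ?_)
    calc (∑' j, μ (E (K + j))) ≤ ∑' j, (2⁻¹ : ℝ≥0∞) ^ (K + j) :=
          ENNReal.tsum_le_tsum fun j => hEbound (K + j)
      _ = 2⁻¹ ^ K * 2 := by
          simp_rw [pow_add]
          rw [ENNReal.tsum_mul_left, hgeo]
  rw [ENNReal.tendsto_nhds_zero]
  intro ε hε
  obtain ⟨M, hM⟩ := hCauchy (ε / 2) (ENNReal.half_pos hε.ne')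
  have htend : Tendsto (fun K : ℕ => (2⁻¹ : ℝ≥0∞) ^ K * 2) atTop (nhds 0) := by
    have h1 : Tendsto (fun K : ℕ => (2⁻¹ : ℝ≥0∞) ^ K) atTop (nhds 0) :=
      ENNReal.tendsto_pow_atTop_nhds_zero_of_lt_one (by norm_num)
    simpa using ENNReal.Tendsto.mul_const h1 (Or.inr ENNReal.ofNat_ne_top)
  obtain ⟨K0, hK0⟩ := (ENNReal.tendsto_nhds_zero.mp htend (ε / 2)
    (ENNReal.half_pos hε.ne')).exists_forall_of_atTop
  set K := max K0 M with hKdef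
  have hφKM : M ≤ φ K := le_trans (le_max_right _ _) (le_trans (hφself K) le_rfl)
  rw [eventually_atTop]
  refine ⟨M, fun n hn => ?_⟩
  have hsub : {ω | u n ω ≠ v ω} ⊆ {ω | u n ω ≠ u (φ K) ω} ∪ {ω | u (φ K) ω ≠ v ω} := by
    intro ω hω
    by_cases h : u n ω = u (φ K) ω
    · right; simpa [Set.mem_setOf_eq, h] using hω
    · left; exact h
  calc μ {ω | u n ω ≠ v ω}
      ≤ μ ({ω | u n ω ≠ u (φ K) ω} ∪ {ω | u (φ K) ω ≠ v ω}) := measure_mono hsub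
    _ ≤ μ {ω | u n ω ≠ u (φ K) ω} + μ {ω | u (φ K) ω ≠ v ω} := measure_union_le _ _
    _ ≤ ε / 2 + ε / 2 := by
        gcongr
        · exact hM (φ K) hφKM n hn
        · exact le_trans (hkey K) (hK0 K (le_max_left _ _))
    _ = ε := ENNReal.add_halves ε
end
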